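/- Let n, d, d' be positive integers and λ > 0. For each i = 1,…,n let h_i ∈ ℝ^d and let ℓ_i : ℝ^{d'} → ℝ be differentiable. Define L_λ(W) = (1/n)·Σ_{i=1}^n ℓ_i(W h_i) + (λ/2)·‖W‖_F² for W ∈ ℝ^{d'×d}, and define the FACT matrix F := −(1/(nλ))·Σ_{i=1}^n (W^⊤ ∇ℓ_i(W h_i)) h_i^⊤ ∈ ℝ^{d×d}. If W is a critical point of L_λ, then (W^⊤ W)² = F·F^⊤; consequently, W^⊤ W is the unique positive semidefinite square root of F·F^⊤, i.e. W^⊤ W = √(F·F^⊤). -/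

import Mathlib

/-!
Differentiating the loss in the direction of a matrix unit `E_ab` shows that at a critical point
`λ W = -(1/n) ∑ᵢ ∇ℓᵢ(W hᵢ) hᵢᵀ`. Multiplying on the left by `Wᵀ` turns the right-hand side into
`λ F`, so `F = Wᵀ W`. Hence `F Fᵀ = (Wᵀ W)²`, and the positive semidefinite matrix `Wᵀ W` is the
square root of its own square.
-/

open Matrix

attribute [local instance] Matrix.frobeniusSeminormedAddCommGroup
  Matrix.frobeniusNormedAddCommGroup Matrix.frobeniusNormedSpace

/-- The gradient of a function `f : ℝ^k → ℝ`, as a plain vector `Fin k → ℝ`. -/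
noncomputable def grad {k : ℕ} (f : EuclideanSpace ℝ (Fin k) → ℝ) (x : Fin k → ℝ) :
    Fin k → ℝ :=
  WithLp.equiv 2 (Fin k → ℝ) <| gradient f ((WithLp.equiv 2 (Fin k → ℝ)).symm x)

/-- The positive semidefinite square root of a positive semidefinite matrix (removed from
Mathlib; restored here with its former definition). -/
noncomputable def Matrix.PosSemidef.sqrt {n 𝕜 : Type*} [Fintype n] [DecidableEq n] [RCLike 𝕜]
    [PartialOrder 𝕜] {A : Matrix n n 𝕜} (hA : A.PosSemidef) : Matrix n n 𝕜 :=
  hA.1.eigenvectorUnitary.1 * diagonal ((↑) ∘ (√·) ∘ hA.1.eigenvalues) *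
    (star hA.1.eigenvectorUnitary : Matrix n n 𝕜)

open scoped MatrixOrder

lemma Matrix.PosSemidef.sqrt_eq_cfcSqrt {n : Type*} [Fintype n] [DecidableEq n]
    {A : Matrix n n ℝ} (hA : A.PosSemidef) : hA.sqrt = CFC.sqrt A := by
  rw [CFC.sqrt_eq_real_sqrt A hA.nonneg, cfcₙ_eq_cfc, hA.1.cfc_eq]
  rfl

lemma Matrix.PosSemidef.sqrt_eq_of_sq_eq {n : Type*} [Fintype n] [DecidableEq n]
    {A B : Matrix n n ℝ} (hA : A.PosSemidef) (hB : B.PosSemidef) (hBA : B ^ 2 = A) :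
    hA.sqrt = B := by
  rw [hA.sqrt_eq_cfcSqrt, ← hBA, CFC.sqrt_sq B hB.nonneg]

section RegularizedLoss

variable {ι m n : Type*} [Fintype ι] [Fintype m] [Fintype n]

noncomputable def Matrix.mulVecCLM (v : n → ℝ) : Matrix m n ℝ →L[ℝ] EuclideanSpace ℝ m :=
  LinearMap.toContinuousLinearMap
    { toFun := fun V => WithLp.toLp 2 (V *ᵥ v)
      map_add' := fun V V' => by simp [add_mulVec]
      map_smul' := fun c V => by simp [smul_mulVec] }

lemma hasFDerivAt_comp_mulVec {f : EuclideanSpace ℝ m → ℝ} {W : Matrix m n ℝ} (v : n → ℝ)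
    (hf : DifferentiableAt ℝ f (WithLp.toLp 2 (W *ᵥ v))) :
    HasFDerivAt (fun V : Matrix m n ℝ => f (WithLp.toLp 2 (V *ᵥ v)))
      ((fderiv ℝ f (WithLp.toLp 2 (W *ᵥ v))).comp (mulVecCLM v)) W :=
  hf.hasFDerivAt.comp W (mulVecCLM v).hasFDerivAt

lemma hasFDerivAt_entry_sq (W : Matrix m n ℝ) (a : m) (b : n) :
    HasFDerivAt (fun V : Matrix m n ℝ => V a b ^ 2)
      ((2 * W a b) • (entryLinearMap ℝ ℝ a b).toContinuousLinearMap) W := by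
  have hpow := ((entryLinearMap ℝ ℝ a b).toContinuousLinearMap.hasFDerivAt (x := W)).pow 2
  refine hpow.congr_fderiv ?_
  ext E
  simp only [LinearMap.coe_toContinuousLinearMap', entryLinearMap_apply, Nat.add_one_sub_one,
    pow_one, nsmul_eq_mul, Nat.cast_ofNat]
  -- the sides differ only by the Frobenius versus the product topology, which agree definitionally
  rfl

noncomputable def regularizedLoss (c lam : ℝ) (h : ι → n → ℝ) (ℓ : ι → EuclideanSpace ℝ m → ℝ)
    (V : Matrix m n ℝ) : ℝ :=
  c * ∑ i, ℓ i (WithLp.toLp 2 (V *ᵥ h i)) + lam / 2 * ∑ a, ∑ b, V a b ^ 2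

lemma hasFDerivAt_regularizedLoss (c lam : ℝ) (h : ι → n → ℝ)
    (ℓ : ι → EuclideanSpace ℝ m → ℝ) {W : Matrix m n ℝ}
    (hℓ : ∀ i, DifferentiableAt ℝ (ℓ i) (WithLp.toLp 2 (W *ᵥ h i))) :
    HasFDerivAt (regularizedLoss c lam h ℓ)
      (c • ∑ i, (fderiv ℝ (ℓ i) (WithLp.toLp 2 (W *ᵥ h i))).comp (mulVecCLM (h i))
        + (lam / 2) • ∑ a, ∑ b,
          (2 * W a b) • (entryLinearMap ℝ ℝ a b).toContinuousLinearMap) W :=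
  ((HasFDerivAt.fun_sum fun i _ => hasFDerivAt_comp_mulVec (h i) (hℓ i)).const_mul c).add
    ((HasFDerivAt.fun_sum fun a _ => HasFDerivAt.fun_sum fun b _ =>
      hasFDerivAt_entry_sq W a b).const_mul (lam / 2))

lemma Matrix.mulVecCLM_single [DecidableEq m] [DecidableEq n] (v : n → ℝ) (a : m) (b : n) :
    mulVecCLM v (single a b 1) = EuclideanSpace.single a (v b) := by
  ext c
  change (single a b 1 *ᵥ v) c = _
  simp [single_mulVec, Function.update_apply]

lemma regularizedLoss_gradient_eq_zero (c lam : ℝ) (h : ι → n → ℝ)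
    (ℓ : ι → EuclideanSpace ℝ m → ℝ) {W : Matrix m n ℝ}
    (hℓ : ∀ i, DifferentiableAt ℝ (ℓ i) (WithLp.toLp 2 (W *ᵥ h i)))
    (hcrit : fderiv ℝ (regularizedLoss c lam h ℓ) W = 0) :
    c • ∑ i, vecMulVec (gradient (ℓ i) (WithLp.toLp 2 (W *ᵥ h i))).ofLp (h i) + lam • W = 0 := by
  classical
  ext a b
  have hab := congr($((hasFDerivAt_regularizedLoss c lam h ℓ hℓ).fderiv.symm.trans hcrit)
    (single a b 1))
  simp only [_root_.add_apply, _root_.smul_apply, _root_.sum_apply, ContinuousLinearMap.comp_apply,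
    mulVecCLM_single, ← inner_gradient_left, EuclideanSpace.inner_single_right, Real.ringHom_apply,
    smul_eq_mul, LinearMap.coe_toContinuousLinearMap', entryLinearMap_apply, single_apply, ite_and,
    mul_ite, mul_one, mul_zero, Finset.sum_ite_irrel, Finset.sum_ite_eq, Finset.mem_univ,
    ↓reduceIte, Finset.sum_const_zero, _root_.zero_apply] at hab
  simp only [Matrix.add_apply, Matrix.smul_apply, Matrix.sum_apply, vecMulVec_apply, smul_eq_mul,
    Matrix.zero_apply]
  simp_rw [mul_comm (h _ b)] at hab
  linarith

end RegularizedLoss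

theorem fact_sqrt_symmetrization_general
    (n d d' : ℕ)
    (lam : ℝ) (hlam : 0 < lam)
    (h : Fin n → Fin d → ℝ)
    (ℓ : Fin n → EuclideanSpace ℝ (Fin d') → ℝ)
    (hdiff : ∀ i, Differentiable ℝ (ℓ i))
    (W : Matrix (Fin d') (Fin d) ℝ)
    (F : Matrix (Fin d) (Fin d) ℝ)
    (hF : F = (-(1 / (n * lam))) •
      ∑ i, Matrix.vecMulVec (Wᵀ.mulVec (grad (ℓ i) (W.mulVec (h i)))) (h i))
    (hcrit : fderiv ℝ
      (fun V : Matrix (Fin d') (Fin d) ℝ =>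
        (1 / n : ℝ) * ∑ i, ℓ i ((WithLp.equiv 2 (Fin d' → ℝ)).symm (V.mulVec (h i)))
          + (lam / 2) * ∑ a : Fin d', ∑ b : Fin d, V a b ^ 2) W = 0) :
    (Wᵀ * W) ^ 2 = F * Fᵀ ∧
      ∀ hp : (F * Fᵀ).PosSemidef, Wᵀ * W = hp.sqrt := by
  set S := ∑ i, vecMulVec (grad (ℓ i) (W *ᵥ h i)) (h i)
  have hgrad : (1 / n : ℝ) • S + lam • W = 0 :=
    regularizedLoss_gradient_eq_zero _ lam h ℓ (fun i => hdiff i _) hcrit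
  have hW : W = (-(1 / (n * lam))) • S := calc
    W = lam⁻¹ • (lam • W) := (inv_smul_smul₀ hlam.ne' W).symm
    _ = lam⁻¹ • -((1 / n : ℝ) • S) := by rw [eq_neg_of_add_eq_zero_right hgrad]
    _ = (-(1 / (n * lam))) • S := by rw [smul_neg, smul_smul, ← neg_smul]; ring_nf
  have hFW : F = Wᵀ * W := calc
    F = Wᵀ * ((-(1 / (n * lam))) • S) := by
      rw [hF, Matrix.mul_smul, Matrix.mul_sum]
      simp_rw [mul_vecMulVec]
    _ = Wᵀ * W := by rw [← hW]
  have hsq : (Wᵀ * W) ^ 2 = F * Fᵀ := by rw [hFW, transpose_mul, transpose_transpose, sq]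
  refine ⟨hsq, fun hp => (hp.sqrt_eq_of_sq_eq ?_ hsq).symm⟩
  simpa using posSemidef_conjTranspose_mul_self W

/-- **Square-root symmetrization of the FACT.** If `W` is a critical point of the regularized
loss, then `(Wᵀ W)² = F Fᵀ` where `F` is the FACT matrix; consequently `Wᵀ W` is the unique
positive semidefinite square root of `F Fᵀ`, i.e. `Wᵀ W = √(F Fᵀ)`. -/
theorem fact_sqrt_symmetrization
    (n d d' : ℕ) (hn : 0 < n) (hd : 0 < d) (hd' : 0 < d')
    (lam : ℝ) (hlam : 0 < lam)
    (h : Fin n → Fin d → ℝ)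
    (ℓ : Fin n → EuclideanSpace ℝ (Fin d') → ℝ)
    (hdiff : ∀ i, Differentiable ℝ (ℓ i))
    (W : Matrix (Fin d') (Fin d) ℝ)
    (F : Matrix (Fin d) (Fin d) ℝ)
    (hF : F = (-(1 / (n * lam))) •
      ∑ i, Matrix.vecMulVec (Wᵀ.mulVec (grad (ℓ i) (W.mulVec (h i)))) (h i))
    (hcrit : fderiv ℝ
      (fun V : Matrix (Fin d') (Fin d) ℝ =>
        (1 / n : ℝ) * ∑ i, ℓ i ((WithLp.equiv 2 (Fin d' → ℝ)).symm (V.mulVec (h i)))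
          + (lam / 2) * ∑ a : Fin d', ∑ b : Fin d, V a b ^ 2) W = 0) :
    (Wᵀ * W) ^ 2 = F * Fᵀ ∧
      ∀ hp : (F * Fᵀ).PosSemidef, Wᵀ * W = hp.sqrt :=
  fact_sqrt_symmetrization_general n d d' lam hlam h ℓ hdiff W F hF hcrit
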